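/- arXiv:1710.10362 — 5 statements merged into one kernel-verified Lean document; each statement's English description precedes it below -/
import Mathlib

section
/- For real numbers b ≥ a > 0, the sum over all integers n of log((n² + b²)/(n² + a²)) equals 2π(b − a) − 2·log((1 − e^{−2πa})/(1 − e^{−2πb})). -/
/-!
Euler's product `sin (π z) = π z ∏ (1 - z² / n²)` at `z = i x` gives
`sinh (π x) / (π x) = ∏_{n ≥ 1} (1 + x² / n²)`, hence
`∑_{n ≥ 1} log (1 + x² / n²) = log (sinh (π x) / (π x))`. The summand is even in `n`, so the sum
over `ℤ` is the `n = 0` term `log (b² / a²)` plus twice the difference of these series for `b`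
and `a`; writing `sinh y = e^y (1 - e^{-2y}) / 2` turns this into the closed form.
-/

open Real Filter Finset Topology

theorem Real.tendsto_euler_sinh_prod (x : ℝ) :
    Tendsto (fun n : ℕ => π * x * ∏ j ∈ range n, (1 + x ^ 2 / ((j : ℝ) + 1) ^ 2))
      atTop (𝓝 (sinh (π * x))) := by
  convert (Complex.continuous_im.tendsto _).comp
    (Complex.tendsto_euler_sin_prod (x * Complex.I)) using 1
  · ext1 n
    have hprod : (∏ j ∈ range n, (1 - ((x : ℂ) * Complex.I) ^ 2 / ((j : ℂ) + 1) ^ 2)) =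
        ((∏ j ∈ range n, (1 + x ^ 2 / ((j : ℝ) + 1) ^ 2) : ℝ) : ℂ) := by
      push_cast
      refine prod_congr rfl fun j _ => ?_
      rw [mul_pow, Complex.I_sq]
      ring
    rw [Function.comp_apply, hprod]
    generalize ∏ j ∈ range n, (1 + x ^ 2 / ((j : ℝ) + 1) ^ 2) = P
    rw [show (π : ℂ) * (x * Complex.I) * P = ((π * x * P : ℝ) : ℂ) * Complex.I by push_cast; ring,
      Complex.mul_I_im, Complex.ofReal_re]
  · rw [← mul_assoc, ← Complex.ofReal_mul, Complex.sin_mul_I, ← Complex.ofReal_sinh,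
      Complex.mul_I_im, Complex.ofReal_re]

theorem Real.hasSum_log_one_add_sq_div_sq {x : ℝ} (hx : x ≠ 0) :
    HasSum (fun n : ℕ => log (1 + x ^ 2 / ((n : ℝ) + 1) ^ 2)) (log (sinh (π * x) / (π * x))) := by
  have hπx : π * x ≠ 0 := mul_ne_zero pi_ne_zero hx
  have hprod := (tendsto_euler_sinh_prod x).div_const (π * x)
  simp only [mul_div_cancel_left₀ _ hπx] at hprod
  have hlim : sinh (π * x) / (π * x) ≠ 0 := div_ne_zero (sinh_ne_zero.2 hπx) hπx
  rw [hasSum_iff_tendsto_nat_of_nonneg fun n => log_nonneg (le_add_of_nonneg_right (by positivity))]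
  refine ((continuousAt_log hlim).tendsto.comp hprod).congr fun n => ?_
  rw [Function.comp_apply, log_prod fun j _ => by positivity]

theorem Real.log_sinh {x : ℝ} (hx : 0 < x) :
    log (sinh x) = x + log (1 - exp (-2 * x)) - log 2 := by
  have hexp : 0 < 1 - exp (-2 * x) := sub_pos.2 (exp_lt_one_iff.2 (by linarith))
  have hsinh : sinh x = exp x * (1 - exp (-2 * x)) / 2 := by
    rw [sinh_eq, mul_sub, mul_one, ← exp_add]
    ring_nf
  rw [hsinh, log_div (by positivity) two_ne_zero, log_mul (exp_ne_zero _) hexp.ne', log_exp]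

theorem HasSum.int_of_even {M : Type*} [AddCommMonoid M] [TopologicalSpace M] [ContinuousAdd M]
    {f : ℤ → M} {m : M} (hf : Function.Even f) (h : HasSum (fun n : ℕ => f (n + 1)) m) :
    HasSum f (m + f 0 + m) :=
  h.of_add_one_of_neg_add_one (by simpa only [hf _] using h)

theorem sum_log_ratio_int (a b : ℝ) (ha : 0 < a) (hab : a ≤ b) :
    ∑' n : ℤ, Real.log (((n : ℝ) ^ 2 + b ^ 2) / ((n : ℝ) ^ 2 + a ^ 2)) =
      2 * π * (b - a) -
        2 * Real.log ((1 - Real.exp (-2 * π * a)) / (1 - Real.exp (-2 * π * b))) := by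
  have hb : 0 < b := ha.trans_le hab
  set f : ℤ → ℝ := fun n => log (((n : ℝ) ^ 2 + b ^ 2) / ((n : ℝ) ^ 2 + a ^ 2))
  have hf_succ : ∀ n : ℕ, f (n + 1) =
      log (1 + b ^ 2 / ((n : ℝ) + 1) ^ 2) - log (1 + a ^ 2 / ((n : ℝ) + 1) ^ 2) := fun n => by
    simp only [f, Int.cast_add, Int.cast_natCast, Int.cast_one]
    rw [← log_div (by positivity) (by positivity)]
    congr 1
    field_simp
  have hsum : HasSum f (_ + f 0 + _) := .int_of_even (fun n => by simp [f]) <|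
    (funext hf_succ).symm ▸ (hasSum_log_one_add_sq_div_sq hb.ne').sub
      (hasSum_log_one_add_sq_div_sq ha.ne')
  have hlog : ∀ x : ℝ, 0 < x → log (sinh (π * x) / (π * x)) =
      π * x + log (1 - exp (-2 * π * x)) - log 2 - log π - log x := fun x hx => by
    rw [log_div (sinh_pos_iff.2 (by positivity)).ne' (by positivity), log_mul pi_ne_zero hx.ne',
      log_sinh (by positivity), ← mul_assoc]
    ring
  have hexp : ∀ x : ℝ, 0 < x → 1 - exp (-2 * π * x) ≠ 0 := fun x hx =>
    (sub_pos.2 (exp_lt_one_iff.2 (by nlinarith [pi_pos]))).ne'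
  have hf_zero : f 0 = 2 * log b - 2 * log a := by
    simp [f, log_div, ha.ne', hb.ne', log_pow]
  rw [hsum.tsum_eq, hlog a ha, hlog b hb, hf_zero, log_div (hexp a ha) (hexp b hb)]
  ring
end

section
/- For a > 0, the Fourier transform of the function h(x) = log((x² + b²)/(x² + a²)) with b ≥ a > 0 is ĥ(ξ) = (e^{−2π|ξ|a} − e^{−2π|ξ|b})/|ξ| for ξ ≠ 0; that is, ∫_{−∞}^{∞} log((x² + b²)/(x² + a²)) e^{−2πixξ} dx = (e^{−2π|ξ|a} − e^{−2π|ξ|b})/|ξ|. -/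
open Real MeasureTheory Set Filter FourierTransform
open scoped Topology

lemma cexp_integrableOn_Ioi (c : ℂ) (hc : c.re < 0) :
    IntegrableOn (fun x : ℝ => Complex.exp (c * x)) (Ioi (0:ℝ)) := by
  apply (exp_neg_integrableOn_Ioi 0 (by linarith : (0:ℝ) < -c.re)).mono' 
  · exact (Complex.continuous_exp.comp (continuous_const.mul Complex.continuous_ofReal)).aestronglyMeasurable
  · filter_upwards with x
    simp [Complex.norm_exp, Complex.mul_re]

lemma cexp_integral_Ioi (c : ℂ) (hc : c.re < 0) :
    ∫ x : ℝ in Ioi (0:ℝ), Complex.exp (c * x) = -c⁻¹ := by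
  have hc0 : c ≠ 0 := fun h => by simp [h] at hc
  have hderiv : ∀ x ∈ Ioi (0:ℝ), HasDerivAt (fun y : ℝ => Complex.exp (c * y) / c)
      (Complex.exp (c * x)) x := by
    intro x _
    have h1 : HasDerivAt (fun z : ℂ => Complex.exp (c * z) / c) (Complex.exp (c * x)) (x:ℂ) := by
      have := (((hasDerivAt_id (x:ℂ)).const_mul c).cexp).div_const c
      simpa [mul_comm, mul_div_assoc, mul_div_cancel_left₀ _ hc0] using this
    simpa using h1.comp_ofReal
  have hcont : ContinuousWithinAt (fun y : ℝ => Complex.exp (c * y) / c) (Ici 0) 0 :=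
    ((Complex.continuous_exp.comp (continuous_const.mul Complex.continuous_ofReal)).div_const c).continuousWithinAt
  have htend : Tendsto (fun y : ℝ => Complex.exp (c * y) / c) atTop (nhds 0) := by
    rw [tendsto_zero_iff_norm_tendsto_zero]
    have : (fun y : ℝ => ‖Complex.exp (c * y) / c‖) = fun y => Real.exp (c.re * y) / ‖c‖ := by
      funext y; simp [Complex.norm_exp, Complex.mul_re]
    rw [this]
    have h2 : Tendsto (fun y : ℝ => c.re * y) atTop atBot :=
      Tendsto.const_mul_atTop_of_neg hc tendsto_id
    simpa using (Real.tendsto_exp_atBot.comp h2).div_const ‖c‖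
  have := integral_Ioi_of_hasDerivAt_of_tendsto hcont hderiv (cexp_integrableOn_Ioi c hc) htend
  rw [this]
  simp [div_eq_mul_inv]

lemma integrableOn_Iic_comp_neg {g : ℝ → ℂ} (h : IntegrableOn (fun x : ℝ => g (-x)) (Ioi (0:ℝ))) :
    IntegrableOn g (Iic (0:ℝ)) := by
  have h_map_neg : (volume.restrict (Ici (0:ℝ))).map Neg.neg = volume.restrict (Iic (0:ℝ)) := by
    conv => rhs; rw [← Measure.map_neg_eq_self (volume : Measure ℝ), measurableEmbedding_neg.restrict_map]
    simp
  rw [IntegrableOn, ← h_map_neg, measurableEmbedding_neg.integrable_map_iff]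
  exact (integrableOn_Ici_iff_integrableOn_Ioi (f := fun x => g (-x)) (b := 0)).2 h

lemma cexp_abs_integral (c lam : ℝ) (hc : 0 < c) :
    ∫ ξ : ℝ, Complex.exp (-(c * |ξ|) + lam * ξ * Complex.I) = 2 * c / (c ^ 2 + lam ^ 2) := by
  set f : ℝ → ℂ := fun ξ => Complex.exp (-(c * |ξ|) + lam * ξ * Complex.I) with hf
  have e1 : ∀ ξ : ℝ, 0 < ξ → f ξ = Complex.exp ((-(c:ℂ) + lam * Complex.I) * ξ) := by
    intro ξ hξ
    rw [hf]
    refine congrArg Complex.exp ?_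
    rw [abs_of_pos hξ]; push_cast; ring
  have e2 : ∀ ξ : ℝ, 0 < ξ → f (-ξ) = Complex.exp ((-(c:ℂ) - lam * Complex.I) * ξ) := by
    intro ξ hξ
    rw [hf]
    refine congrArg Complex.exp ?_
    rw [abs_neg, abs_of_pos hξ]; push_cast; ring
  have hre1 : (-(c:ℂ) + lam * Complex.I).re < 0 := by simp [hc]
  have hre2 : (-(c:ℂ) - lam * Complex.I).re < 0 := by simp [hc]
  have h1 : IntegrableOn f (Ioi (0:ℝ)) :=
    (cexp_integrableOn_Ioi _ hre1).congr_fun (fun ξ hξ => (e1 ξ hξ).symm) measurableSet_Ioi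
  have h2 : IntegrableOn f (Iic (0:ℝ)) := by
    apply integrableOn_Iic_comp_neg
    exact (cexp_integrableOn_Ioi _ hre2).congr_fun (fun ξ hξ => (e2 ξ hξ).symm) measurableSet_Ioi
  have hint : Integrable f := by
    rw [← integrableOn_univ, ← Iic_union_Ioi (a := (0:ℝ))]
    exact h2.union h1
  have hsplit : ∫ ξ : ℝ, f ξ = (∫ ξ in Ioi (0:ℝ), f ξ) + ∫ ξ in Iic (0:ℝ), f ξ := by
    rw [← compl_Ioi, integral_add_compl measurableSet_Ioi hint]
  have v1 : ∫ ξ in Ioi (0:ℝ), f ξ = -(-(c:ℂ) + lam * Complex.I)⁻¹ := by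
    rw [setIntegral_congr_fun measurableSet_Ioi (fun ξ hξ => e1 ξ hξ)]
    exact cexp_integral_Ioi _ hre1
  have v2 : ∫ ξ in Iic (0:ℝ), f ξ = -(-(c:ℂ) - lam * Complex.I)⁻¹ := by
    have h3 := integral_comp_neg_Iic (0:ℝ) (fun x => f (-x))
    simp only [neg_neg, neg_zero] at h3
    rw [h3, setIntegral_congr_fun measurableSet_Ioi (fun ξ hξ => e2 ξ hξ)]
    exact cexp_integral_Ioi _ hre2
  rw [hsplit, v1, v2]
  have d1 : (-(c:ℂ) + lam * Complex.I) ≠ 0 := fun h => by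
    have := congrArg Complex.re h; simp at this; linarith
  have d2 : (-(c:ℂ) - lam * Complex.I) ≠ 0 := fun h => by
    have := congrArg Complex.re h; simp at this; linarith
  have d3 : ((c:ℂ)^2 + lam^2) ≠ 0 := by
    have : ((c:ℂ)^2 + lam^2) = ((c^2 + lam^2 : ℝ) : ℂ) := by push_cast; ring
    rw [this]
    simp only [ne_eq, Complex.ofReal_eq_zero]
    positivity
  field_simp
  ring_nf
  simp [Complex.I_sq]


lemma integrableOn_Iic_comp_neg' {E : Type*} [NormedAddCommGroup E] {g : ℝ → E}
    (h : IntegrableOn (fun x : ℝ => g (-x)) (Ioi (0:ℝ))) :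
    IntegrableOn g (Iic (0:ℝ)) := by
  have h_map_neg : (volume.restrict (Ici (0:ℝ))).map Neg.neg = volume.restrict (Iic (0:ℝ)) := by
    conv => rhs; rw [← Measure.map_neg_eq_self (volume : Measure ℝ), measurableEmbedding_neg.restrict_map]
    simp
  rw [IntegrableOn, ← h_map_neg, measurableEmbedding_neg.integrable_map_iff]
  exact (integrableOn_Ici_iff_integrableOn_Ioi (f := fun x => g (-x)) (b := 0)).2 h

lemma integrable_exp_neg_mul_abs {k : ℝ} (hk : 0 < k) :
    Integrable (fun x : ℝ => rexp (-k * |x|)) := by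
  have h1 : IntegrableOn (fun x : ℝ => rexp (-k * |x|)) (Ioi (0:ℝ)) :=
    (exp_neg_integrableOn_Ioi 0 hk).congr_fun (fun x hx => by rw [abs_of_pos hx]) measurableSet_Ioi
  have h2 : IntegrableOn (fun x : ℝ => rexp (-k * |x|)) (Iic (0:ℝ)) := by
    apply integrableOn_Iic_comp_neg'
    exact (exp_neg_integrableOn_Ioi 0 hk).congr_fun
      (fun x hx => by rw [abs_neg, abs_of_pos hx]) measurableSet_Ioi
  rw [← integrableOn_univ, ← Iic_union_Ioi (a := (0:ℝ))]
  exact h2.union h1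

section
variable {a b : ℝ}

lemma hfun_cont (ha : 0 < a) (hab : a ≤ b) :
    Continuous (fun x : ℝ => Real.log ((x^2+b^2)/(x^2+a^2))) := by
  have hb : 0 < b := lt_of_lt_of_le ha hab
  apply Continuous.log
  · apply Continuous.div (by continuity) (by continuity)
    intro x; positivity
  · intro x
    have h1 : (0:ℝ) < x^2+a^2 := by positivity
    have h2 : (0:ℝ) < x^2+b^2 := by positivity
    positivity

lemma integrable_inv_sq_add (ha : 0 < a) : Integrable (fun x : ℝ => (x^2+a^2)⁻¹) := by
  have h1 := (integrable_inv_one_add_sq.comp_div (ne_of_gt ha)).const_mul (a⁻¹*a⁻¹)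
  apply h1.congr
  filter_upwards with x
  have : a ≠ 0 := ne_of_gt ha
  field_simp
  ring

lemma hfun_nonneg (hab : a ≤ b) (x : ℝ) (ha : 0 < a) :
    0 ≤ Real.log ((x^2+b^2)/(x^2+a^2)) := by
  apply Real.log_nonneg
  rw [le_div_iff₀ (by positivity)]
  nlinarith

lemma hfun_bound (ha : 0 < a) (hab : a ≤ b) (x : ℝ) :
    ‖Real.log ((x^2+b^2)/(x^2+a^2))‖ ≤ (b^2-a^2) * (x^2+a^2)⁻¹ := by
  have h1 : (0:ℝ) < x^2+a^2 := by positivity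
  have h2 : (0:ℝ) < x^2+b^2 := by nlinarith
  rw [Real.norm_of_nonneg (hfun_nonneg hab x ha)]
  have h3 := Real.log_le_sub_one_of_pos (div_pos h2 h1)
  calc Real.log ((x^2+b^2)/(x^2+a^2)) ≤ (x^2+b^2)/(x^2+a^2) - 1 := h3
    _ = (b^2-a^2) * (x^2+a^2)⁻¹ := by field_simp; ring

lemma hfun_integrable (ha : 0 < a) (hab : a ≤ b) :
    Integrable (fun x : ℝ => Real.log ((x^2+b^2)/(x^2+a^2))) := by
  apply Integrable.mono' ((integrable_inv_sq_add ha).const_mul (b^2-a^2))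
    (hfun_cont ha hab).aestronglyMeasurable
  filter_upwards with x
  simpa [mul_comm] using hfun_bound ha hab x

lemma hfun_integrable_complex (ha : 0 < a) (hab : a ≤ b) :
    Integrable (fun x : ℝ => ((Real.log ((x^2+b^2)/(x^2+a^2)) : ℝ) : ℂ)) :=
  (hfun_integrable ha hab).ofReal

noncomputable def gfun (a b ξ : ℝ) : ℂ :=
  ∫ t in Ioc a b, (2*π:ℂ) * Complex.exp (-(((2*π*|ξ|):ℝ):ℂ) * t)

lemma gfun_norm_bound (ha : 0 < a) (hab : a ≤ b) (ξ : ℝ) :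
    ‖gfun a b ξ‖ ≤ 2*π*Real.exp (-(2*π*a)*|ξ|) * (b-a) := by
  have key : ∀ t ∈ Ioc a b, ‖(2*π:ℂ) * Complex.exp (-(((2*π*|ξ|):ℝ):ℂ) * t)‖
      ≤ 2*π*Real.exp (-(2*π*a)*|ξ|) := by
    intro t ht
    rw [norm_mul]
    have h1 : ‖(2*π:ℂ)‖ = 2*π := by
      rw [show (2*π:ℂ) = ((2*π:ℝ):ℂ) by push_cast; ring, Complex.norm_real,
        Real.norm_of_nonneg (by positivity)]
    rw [h1]
    have h2 : ‖Complex.exp (-(((2*π*|ξ|):ℝ):ℂ) * t)‖ = Real.exp (-(2*π*|ξ|) * t) := by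
      rw [show (-(((2*π*|ξ|):ℝ):ℂ) * t) = (((-(2*π*|ξ|) * t : ℝ)):ℂ) by push_cast; ring]
      rw [Complex.norm_exp]
      simp
    rw [h2]
    have h3 : -(2*π*|ξ|) * t ≤ -(2*π*a)*|ξ| := by
      have hat : a ≤ t := le_of_lt ht.1
      nlinarith [mul_le_mul_of_nonneg_left hat (by positivity : (0:ℝ) ≤ 2*π*|ξ|)]
    have := Real.exp_le_exp.2 h3
    nlinarith [Real.pi_pos, Real.exp_pos (-(2*π*|ξ|) * t)]
  have := norm_setIntegral_le_of_norm_le_const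
    (measure_Ioc_lt_top : volume (Ioc a b) < ⊤) key
  calc ‖gfun a b ξ‖ ≤ 2*π*Real.exp (-(2*π*a)*|ξ|) * (volume (Ioc a b)).toReal := this
    _ = 2*π*Real.exp (-(2*π*a)*|ξ|) * (b-a) := by
        rw [Real.volume_Ioc, ENNReal.toReal_ofReal (by linarith)]

lemma gfun_continuous (ha : 0 < a) (hab : a ≤ b) : Continuous (gfun a b) := by
  apply continuous_of_dominated (bound := fun _ : ℝ => 2*π)
  · intro ξ; apply Continuous.aestronglyMeasurable; continuity
  · intro ξ
    filter_upwards [ae_restrict_mem measurableSet_Ioc] with t ht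
    rw [norm_mul]
    have h1 : ‖(2*π:ℂ)‖ = 2*π := by
      rw [show (2*π:ℂ) = ((2*π:ℝ):ℂ) by push_cast; ring, Complex.norm_real,
        Real.norm_of_nonneg (by positivity)]
    have h2 : ‖Complex.exp (-(((2*π*|ξ|):ℝ):ℂ) * t)‖ = Real.exp (-(2*π*|ξ|) * t) := by
      rw [show (-(((2*π*|ξ|):ℝ):ℂ) * t) = (((-(2*π*|ξ|) * t : ℝ)):ℂ) by push_cast; ring]
      rw [Complex.norm_exp]
      simp
    rw [h1, h2]
    have h3 : -(2*π*|ξ|) * t ≤ 0 := by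
      have h0t : 0 < t := lt_of_le_of_lt (le_of_lt ha) ht.1
      nlinarith [mul_nonneg (mul_nonneg (by positivity : (0:ℝ) ≤ 2*π) (abs_nonneg ξ)) h0t.le]
    nlinarith [Real.exp_le_one_iff.2 h3, Real.pi_pos]
  · exact integrableOn_const measure_Ioc_lt_top.ne
  · filter_upwards with t
    continuity

lemma gfun_integrable (ha : 0 < a) (hab : a ≤ b) : Integrable (gfun a b) := by
  have hmeas : Continuous (gfun a b) := gfun_continuous ha hab
  apply Integrable.mono' ((integrable_exp_neg_mul_abs (k := 2*π*a) (by positivity)).const_mul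
    (2*π*(b-a))) hmeas.aestronglyMeasurable
  filter_upwards with ξ
  calc ‖gfun a b ξ‖ ≤ 2*π*Real.exp (-(2*π*a)*|ξ|) * (b-a) := gfun_norm_bound ha hab ξ
    _ = 2*π*(b-a) * rexp (-(2*π*a) * |ξ|) := by ring

end

section
variable {a b : ℝ}

lemma fourier_gfun (ha : 0 < a) (hab : a ≤ b) (x : ℝ) :
    𝓕 (gfun a b) x = ((Real.log ((x^2+b^2)/(x^2+a^2)) : ℝ) : ℂ) := by
  set F : ℝ → ℝ → ℂ := fun ξ t =>
    Complex.exp (((-2*π*(ξ*x) : ℝ) : ℂ) * Complex.I) *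
      ((2*π:ℂ) * Complex.exp (-(((2*π*|ξ|):ℝ):ℂ) * t)) with hF
  have hF_cont : Continuous (Function.uncurry F) := by
    apply Continuous.mul
    · apply Complex.continuous_exp.comp
      apply Continuous.mul _ continuous_const
      exact Complex.continuous_ofReal.comp (by fun_prop)
    · apply Continuous.mul continuous_const
      apply Complex.continuous_exp.comp
      apply Continuous.mul
      · apply Continuous.neg
        exact Complex.continuous_ofReal.comp (by fun_prop)
      · exact Complex.continuous_ofReal.comp continuous_snd
  have hnorm : ∀ ξ t : ℝ, ‖F ξ t‖ = 2*π*Real.exp (-(2*π*|ξ|)*t) := by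
    intro ξ t
    have h2 : ‖Complex.exp (-(((2*π*|ξ|):ℝ):ℂ) * t)‖ = Real.exp (-(2*π*|ξ|) * t) := by
      rw [show (-(((2*π*|ξ|):ℝ):ℂ) * t) = (((-(2*π*|ξ|) * t : ℝ)):ℂ) by push_cast; ring]
      rw [Complex.norm_exp]
      simp
    rw [hF]
    simp only [norm_mul, Complex.norm_exp_ofReal_mul_I, one_mul, h2, Complex.norm_real,
      Real.norm_of_nonneg Real.pi_pos.le]
    norm_num
  have hbound : ∀ ξ t : ℝ, a ≤ t → ‖F ξ t‖ ≤ 2*π*Real.exp (-(2*π*a)*|ξ|) := by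
    intro ξ t hat
    rw [hnorm]
    have h3 : -(2*π*|ξ|) * t ≤ -(2*π*a)*|ξ| := by
      nlinarith [mul_le_mul_of_nonneg_left hat (by positivity : (0:ℝ) ≤ 2*π*|ξ|)]
    nlinarith [Real.exp_le_exp.2 h3, Real.pi_pos, Real.exp_pos (-(2*π*|ξ|) * t)]
  have hInt : Integrable (Function.uncurry F) (volume.prod (volume.restrict (Ioc a b))) := by
    rw [integrable_prod_iff hF_cont.aestronglyMeasurable]
    constructor
    · filter_upwards with ξ
      exact (hF_cont.comp (Continuous.prodMk_right ξ)).integrableOn_Ioc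
    · apply Integrable.mono' ((integrable_exp_neg_mul_abs (k := 2*π*a) (by positivity)).const_mul
        (2*π*(b-a)))
      · exact hF_cont.aestronglyMeasurable.norm.integral_prod_right'
      · filter_upwards with ξ
        have key : ∀ t ∈ Ioc a b, ‖‖F ξ t‖‖ ≤ 2*π*Real.exp (-(2*π*a)*|ξ|) := by
          intro t ht
          rw [Real.norm_of_nonneg (norm_nonneg _)]
          exact hbound ξ t ht.1.le
        have h4 := norm_setIntegral_le_of_norm_le_const
          (measure_Ioc_lt_top : volume (Ioc a b) < ⊤) key
        rw [Real.volume_real_Ioc_of_le hab] at h4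
        calc ‖∫ t in Ioc a b, ‖F ξ t‖‖ ≤ 2*π*Real.exp (-(2*π*a)*|ξ|) * (b-a) := h4
          _ = 2*π*(b-a) * rexp (-(2*π*a) * |ξ|) := by ring
  have step1 : 𝓕 (gfun a b) x = ∫ ξ : ℝ, ∫ t in Ioc a b, F ξ t := by
    rw [Real.fourier_eq']
    congr 1
    funext ξ
    rw [smul_eq_mul, hF]
    simp only [RCLike.inner_apply, conj_trivial]
    rw [gfun, ← integral_const_mul]
    simp only [mul_comm x ξ]
  rw [step1, integral_integral_swap hInt]
  have step2 : ∀ t ∈ Ioc a b, (∫ ξ : ℝ, F ξ t) = ((2*t/(t^2+x^2) : ℝ) : ℂ) := by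
    intro t ht
    have h0t : 0 < t := lt_trans ha ht.1
    have heq : ∀ ξ : ℝ, F ξ t
        = (2*π:ℂ) * Complex.exp (-((2*π*t : ℝ) * |ξ|) + (-2*π*x : ℝ) * ξ * Complex.I) := by
      intro ξ
      rw [hF]
      have : Complex.exp (((-2*π*(ξ*x) : ℝ) : ℂ) * Complex.I) *
          Complex.exp (-(((2*π*|ξ|):ℝ):ℂ) * t)
          = Complex.exp (-(((2*π*t : ℝ):ℂ) * ((|ξ| : ℝ):ℂ)) + ((-2*π*x : ℝ):ℂ) * (ξ:ℂ) * Complex.I) := by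
        rw [← Complex.exp_add]
        refine congrArg Complex.exp ?_
        push_cast
        ring
      calc Complex.exp (((-2*π*(ξ*x) : ℝ) : ℂ) * Complex.I) *
          ((2*π:ℂ) * Complex.exp (-(((2*π*|ξ|):ℝ):ℂ) * t))
          = (2*π:ℂ) * (Complex.exp (((-2*π*(ξ*x) : ℝ) : ℂ) * Complex.I) *
            Complex.exp (-(((2*π*|ξ|):ℝ):ℂ) * t)) := by ring
        _ = _ := by rw [this]
    simp only [heq]
    rw [integral_const_mul, cexp_abs_integral (2*π*t) (-2*π*x) (by positivity)]
    have hden : (0:ℝ) < t^2+x^2 := by positivity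
    rw [show ((2*π:ℂ) * (2 * (2*π*t:ℝ) / ((2*π*t:ℝ)^2 + (-2*π*x:ℝ)^2)))
        = (((2*π * (2 * (2*π*t) / ((2*π*t)^2 + (-2*π*x)^2)) : ℝ)):ℂ) by push_cast; ring]
    congr 1
    have hpi := Real.pi_pos
    field_simp
  have hcoe : (∫ t in Ioc a b, ((2*t/(t^2+x^2) : ℝ) : ℂ))
      = (((∫ t in Ioc a b, 2*t/(t^2+x^2)) : ℝ) : ℂ) := integral_ofReal
  rw [setIntegral_congr_fun measurableSet_Ioc step2, hcoe]
  congr 1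
  rw [← intervalIntegral.integral_of_le hab]
  have hftc : ∫ t in a..b, 2*t/(t^2+x^2) = Real.log (b^2+x^2) - Real.log (a^2+x^2) := by
    apply intervalIntegral.integral_eq_sub_of_hasDerivAt
    · intro t ht
      rw [uIcc_of_le hab] at ht
      have h1 : (0:ℝ) < t^2+x^2 := by nlinarith [ht.1, ha]
      have h2 : HasDerivAt (fun y : ℝ => y^2 + x^2) (2*t) t := by
        simpa using ((hasDerivAt_pow 2 t).add_const (x^2))
      have h3 := (Real.hasDerivAt_log (ne_of_gt h1)).comp t h2
      convert h3 using 1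
      · rfl
      · rfl
      · ring
    · apply ContinuousOn.intervalIntegrable
      apply ContinuousOn.div (by fun_prop) (by fun_prop)
      intro t ht
      rw [uIcc_of_le hab] at ht
      have h1 : (0:ℝ) < t^2+x^2 := by nlinarith [ht.1, ha]
      exact ne_of_gt h1
  rw [hftc]
  have h1 : (0:ℝ) < x^2+a^2 := by positivity
  have h2 : (0:ℝ) < x^2+b^2 := by nlinarith
  rw [Real.log_div (ne_of_gt h2) (ne_of_gt h1)]
  rw [show x^2+b^2 = b^2+x^2 by ring, show x^2+a^2 = a^2+x^2 by ring]

end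


theorem fourier_transform_log_ratio (a b ξ : ℝ) (ha : 0 < a) (hab : a ≤ b) (hξ : ξ ≠ 0) :
    ∫ x : ℝ, (Real.log ((x ^ 2 + b ^ 2) / (x ^ 2 + a ^ 2)) : ℂ) *
        Complex.exp (-2 * π * Complex.I * x * ξ) =
      ((Real.exp (-2 * π * |ξ| * a) - Real.exp (-2 * π * |ξ| * b)) / |ξ| : ℝ) := by
  have hxabs : 0 < |ξ| := abs_pos.2 hξ
  set hC : ℝ → ℂ := fun x => ((Real.log ((x ^ 2 + b ^ 2) / (x ^ 2 + a ^ 2)) : ℝ) : ℂ) with hhC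
  have hfeq : 𝓕 (gfun a b) = hC := funext (fun x => fourier_gfun ha hab x)
  have hL : (∫ x : ℝ, (Real.log ((x ^ 2 + b ^ 2) / (x ^ 2 + a ^ 2)) : ℂ) *
      Complex.exp (-2 * π * Complex.I * x * ξ)) = 𝓕 hC ξ := by
    rw [Real.fourier_eq']
    congr 1
    funext v
    simp only [RCLike.inner_apply, conj_trivial, smul_eq_mul, hhC]
    rw [mul_comm]
    congr 1
    refine congrArg Complex.exp ?_
    push_cast
    ring
  have hinv : 𝓕⁻ (𝓕 (gfun a b)) (-ξ) = gfun a b (-ξ) := by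
    apply (gfun_integrable ha hab).fourierInv_fourier_eq
    · rw [hfeq]; exact hfun_integrable_complex ha hab
    · exact (gfun_continuous ha hab).continuousAt
  have h2 : 𝓕 hC ξ = gfun a b (-ξ) := by
    rw [← hfeq, ← hinv, Real.fourierInv_eq_fourier_neg, neg_neg]
  have h3 : gfun a b (-ξ) = gfun a b ξ := by simp only [gfun, abs_neg]
  rw [hL, h2, h3]
  have h4 : ∀ t : ℝ, t ∈ Ioc a b →
      (2*π:ℂ) * Complex.exp (-(((2*π*|ξ|):ℝ):ℂ) * t)
        = ((2*π*rexp (-(2*π*|ξ|)*t) : ℝ) : ℂ) := by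
    intro t _
    rw [show (-(((2*π*|ξ|):ℝ):ℂ) * t) = ((-(2*π*|ξ|)*t : ℝ) : ℂ) by push_cast; ring,
      ← Complex.ofReal_exp]
    push_cast
    ring
  have hcoe : (∫ t in Ioc a b, ((2*π*rexp (-(2*π*|ξ|)*t) : ℝ) : ℂ))
      = (((∫ t in Ioc a b, 2*π*rexp (-(2*π*|ξ|)*t)) : ℝ) : ℂ) := integral_ofReal
  rw [gfun, setIntegral_congr_fun measurableSet_Ioc h4, hcoe]
  congr 1
  rw [← intervalIntegral.integral_of_le hab]
  have hderiv : ∀ t ∈ uIcc a b, HasDerivAt (fun t => -(1/|ξ|) * rexp (-(2*π*|ξ|)*t))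
      (2*π*rexp (-(2*π*|ξ|)*t)) t := by
    intro t _
    have := ((hasDerivAt_id t).const_mul (-(2*π*|ξ|))).exp.const_mul (-(1/|ξ|))
    convert this using 1
    · rfl
    · rfl
    · rfl
    · simp only [id]
      field_simp
  rw [intervalIntegral.integral_eq_sub_of_hasDerivAt hderiv
    (by apply Continuous.intervalIntegrable; continuity)]
  simp only [show ∀ t : ℝ, -(2*π*|ξ|)*t = -2*π*(|ξ| * t) from fun t => by ring,
    show -2*π*(|ξ| * a) = -2 * π * |ξ| * a from by ring,
    show -2*π*(|ξ| * b) = -2 * π * |ξ| * b from by ring]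
  field_simp
  ring_nf
end

section
/- Let β > 0 and Δ > 0. The integral over ℝ of the difference between the Poisson kernel h_β(x) = β/(β² + x²) and the minorant m⁻(x) = (β/(β² + x²))·(e^{2πβΔ} + e^{−2πβΔ} − 2cos(2πΔx))/(e^{πβΔ} + e^{−πβΔ})² equals 2π e^{−2πβΔ}/(1 + e^{−2πβΔ}). -/
set_option maxHeartbeats 1000000


open Real MeasureTheory

open Filter Topology Set FourierTransform in
private lemma aux_cos_Ioi (a b : ℝ) (ha : 0 < a) :
    ∫ x in Ioi (0:ℝ), rexp (-a * x) * Real.cos (b * x) = a / (a ^ 2 + b ^ 2) := by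
  have hab : (0:ℝ) < a ^ 2 + b ^ 2 := by positivity
  have key := integral_Ioi_of_hasDerivAt_of_tendsto' (a := (0:ℝ)) (m := 0)
      (f := fun x ↦ rexp (-a * x) * (b * Real.sin (b * x) - a * Real.cos (b * x)) / (a ^ 2 + b ^ 2))
      (f' := fun x ↦ rexp (-a * x) * Real.cos (b * x))
      (fun x _ ↦ by
        have he : HasDerivAt (fun x : ℝ ↦ rexp (-a * x)) (rexp (-a * x) * (-a)) x := by
          simpa using ((hasDerivAt_id x).const_mul (-a)).exp
        have hs : HasDerivAt (fun x : ℝ ↦ Real.sin (b * x)) (Real.cos (b * x) * b) x := by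
          simpa using ((hasDerivAt_id x).const_mul b).sin
        have hc : HasDerivAt (fun x : ℝ ↦ Real.cos (b * x)) (-Real.sin (b * x) * b) x := by
          simpa using ((hasDerivAt_id x).const_mul b).cos
        have := ((he.mul ((hs.const_mul b).sub (hc.const_mul a))).div_const (a ^ 2 + b ^ 2))
        refine this.congr_deriv ?_
        rw [div_eq_iff hab.ne']
        simp only [Pi.sub_apply]
        ring)
      (by
        refine Integrable.mono (exp_neg_integrableOn_Ioi 0 ha) ?_ ?_
        · exact (((Real.continuous_exp.comp (continuous_const.mul continuous_id)).mul
            (Real.continuous_cos.comp (continuous_const.mul continuous_id)))).aestronglyMeasurable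
        · filter_upwards with x
          simp only [norm_mul, Real.norm_eq_abs, Real.abs_exp]
          calc rexp (-a * x) * |Real.cos (b * x)| ≤ rexp (-a * x) * 1 := by
                gcongr; exact Real.abs_cos_le_one _
            _ = rexp (-a * x) := mul_one _)
      (by
        refine squeeze_zero_norm (a := fun x ↦ rexp (-a * x) * ((|b| + |a|) / (a ^ 2 + b ^ 2)))
          (fun x ↦ ?_) ?_
        · have hnum : |b * Real.sin (b*x) - a * Real.cos (b*x)| ≤ |b| + |a| :=
            calc |b * Real.sin (b*x) - a * Real.cos (b*x)|
                ≤ |b * Real.sin (b*x)| + |a * Real.cos (b*x)| := abs_sub _ _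
              _ ≤ |b| * 1 + |a| * 1 := by
                  rw [abs_mul, abs_mul]
                  gcongr
                  · exact Real.abs_sin_le_one _
                  · exact Real.abs_cos_le_one _
              _ = |b| + |a| := by ring
          simp only [norm_div, norm_mul, Real.norm_eq_abs, Real.abs_exp]
          rw [abs_of_pos hab, mul_div_assoc]
          exact mul_le_mul_of_nonneg_left ((div_le_div_iff_of_pos_right hab).mpr hnum)
            (Real.exp_pos _).le
        · have h0 : Tendsto (fun x : ℝ ↦ a * x) atTop atTop :=
            Filter.Tendsto.const_mul_atTop ha Filter.tendsto_id
          have h1 : Tendsto (fun x : ℝ ↦ rexp (-a * x)) atTop (𝓝 0) := by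
            have := Real.tendsto_exp_neg_atTop_nhds_zero.comp h0
            simpa [Function.comp_def, neg_mul] using this
          simpa using h1.mul_const ((|b| + |a|) / (a ^ 2 + b ^ 2)))
  rw [key]
  simp only [mul_zero, Real.exp_zero, Real.sin_zero, Real.cos_zero, mul_one, one_mul]
  field_simp
  ring

open Filter Topology Set FourierTransform in
private lemma aux_cos_line (a b : ℝ) (ha : 0 < a) :
    ∫ x : ℝ, rexp (-a * |x|) * Real.cos (b * x) = 2 * (a / (a ^ 2 + b ^ 2)) := by
  have h1 : (fun x : ℝ ↦ rexp (-a * |x|) * Real.cos (b * x))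
      = fun x : ℝ ↦ (fun t ↦ rexp (-a * t) * Real.cos (b * t)) |x| := by
    funext x
    rcases le_or_gt 0 x with h | h
    · simp [abs_of_nonneg h]
    · have hx : |x| = -x := abs_of_neg h
      simp only [hx, mul_neg, neg_neg, Real.cos_neg]
  rw [h1]
  exact (integral_comp_abs (f := fun t ↦ rexp (-a * t) * Real.cos (b * t))).trans
    (by rw [aux_cos_Ioi a b ha])

open Filter Topology Set FourierTransform in
private lemma aux_int_exp_abs (a : ℝ) (ha : 0 < a) :
    Integrable (fun x : ℝ ↦ rexp (-a * |x|)) := by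
  have hIoi : IntegrableOn (fun x : ℝ ↦ rexp (-a * |x|)) (Ioi 0) :=
    (exp_neg_integrableOn_Ioi 0 ha).congr_fun
      (fun x hx ↦ by rw [abs_of_pos hx]) measurableSet_Ioi
  have hIic : IntegrableOn (fun x : ℝ ↦ rexp (-a * |x|)) (Iic 0) := by
    rw [← Measure.map_neg_eq_self (volume : Measure ℝ)]
    have m : MeasurableEmbedding fun x : ℝ ↦ -x :=
      (Homeomorph.neg ℝ).measurableEmbedding
    rw [m.integrableOn_map_iff]
    simp only [Function.comp_def, abs_neg, neg_preimage, neg_Iic, neg_zero]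
    exact (integrableOn_Ici_iff_integrableOn_Ioi).mpr hIoi
  have := hIic.union hIoi
  rwa [Iic_union_Ioi, integrableOn_univ] at this

open Filter Topology Set FourierTransform in
private lemma aux_fourier_even_real (g : ℝ → ℝ) (hg : Integrable g)
    (hsym : ∀ x, g (-x) = g x) (w : ℝ) :
    𝓕 (fun x : ℝ ↦ (g x : ℂ)) w
      = (↑(∫ x : ℝ, g x * Real.cos (2 * π * w * x)) : ℂ) := by
  have hc : Integrable fun x : ℝ ↦ g x * Real.cos (-2 * π * x * w) := by
    apply hg.abs.mono
    · exact (hg.1.mul ((Real.continuous_cos.comp (by continuity)).aestronglyMeasurable))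
    · filter_upwards with x
      simp only [norm_mul, Real.norm_eq_abs, abs_abs]
      calc |g x| * |Real.cos (-2 * π * x * w)| ≤ |g x| * 1 := by
            gcongr; exact Real.abs_cos_le_one _
        _ = |g x| := mul_one _
  have hs : Integrable fun x : ℝ ↦ g x * Real.sin (-2 * π * x * w) := by
    apply hg.abs.mono
    · exact (hg.1.mul ((Real.continuous_sin.comp (by continuity)).aestronglyMeasurable))
    · filter_upwards with x
      simp only [norm_mul, Real.norm_eq_abs, abs_abs]
      calc |g x| * |Real.sin (-2 * π * x * w)| ≤ |g x| * 1 := by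
            gcongr; exact Real.abs_sin_le_one _
        _ = |g x| := mul_one _
  rw [Real.fourier_real_eq_integral_exp_smul]
  have hpt : ∀ v : ℝ, Complex.exp ((↑(-2 * π * v * w)) * Complex.I) • ((g v : ℂ))
      = ((g v * Real.cos (-2 * π * v * w) : ℝ) : ℂ)
        + ((g v * Real.sin (-2 * π * v * w) : ℝ) : ℂ) * Complex.I := by
    intro v
    rw [smul_eq_mul, Complex.exp_mul_I, ← Complex.ofReal_cos, ← Complex.ofReal_sin]
    push_cast
    ring
  have hcC : Integrable (fun x : ℝ ↦ ((g x * Real.cos (-2 * π * x * w) : ℝ) : ℂ)) := hc.ofReal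
  have hsC : Integrable (fun x : ℝ ↦ ((g x * Real.sin (-2 * π * x * w) : ℝ) : ℂ) * Complex.I) :=
    hs.ofReal.mul_const Complex.I
  rw [integral_congr_ae (Filter.Eventually.of_forall hpt)]
  rw [integral_add hcC hsC]
  have hsin0 : ∫ x : ℝ, g x * Real.sin (-2 * π * x * w) = 0 := by
    have hneg := integral_neg_eq_self (fun x : ℝ ↦ g x * Real.sin (-2 * π * x * w))
      (volume : Measure ℝ)
    have heq : ∀ x : ℝ, g (-x) * Real.sin (-2 * π * (-x) * w)
        = -(g x * Real.sin (-2 * π * x * w)) := by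
      intro x
      rw [hsym]
      rw [show (-2 * π * (-x) * w) = -(-2 * π * x * w) by ring, Real.sin_neg]
      ring
    rw [integral_congr_ae (Filter.Eventually.of_forall heq), integral_neg] at hneg
    linarith
  have h2 : ∫ x : ℝ, ((g x * Real.sin (-2 * π * x * w) : ℝ) : ℂ) * Complex.I
      = (↑(∫ x : ℝ, g x * Real.sin (-2 * π * x * w)) : ℂ) * Complex.I := by
    rw [MeasureTheory.integral_mul_const]
    congr 1
    exact integral_ofReal
  rw [h2, hsin0]
  have h3 : ∫ x : ℝ, ((g x * Real.cos (-2 * π * x * w) : ℝ) : ℂ)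
      = (↑(∫ x : ℝ, g x * Real.cos (-2 * π * x * w)) : ℂ) := integral_ofReal
  rw [h3]
  have h4 : ∀ x : ℝ, g x * Real.cos (-2 * π * x * w) = g x * Real.cos (2 * π * w * x) := by
    intro x
    rw [show (-2 * π * x * w) = -(2 * π * w * x) by ring, Real.cos_neg]
  rw [integral_congr_ae (Filter.Eventually.of_forall h4)]
  simp

open Filter Topology Set FourierTransform in
private lemma poisson_cos (β Δ : ℝ) (hβ : 0 < β) :
    ∫ x : ℝ, β / (β ^ 2 + x ^ 2) * Real.cos (2 * π * Δ * x)
      = π * rexp (-(2 * π * β) * |Δ|) := by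
  set a : ℝ := 2 * π * β with ha_def
  have ha : 0 < a := by positivity
  have hfi : Integrable (fun x : ℝ ↦ rexp (-a * |x|)) := aux_int_exp_abs a ha
  have hsymf : ∀ x : ℝ, rexp (-a * |(-x)|) = rexp (-a * |x|) := fun x ↦ by rw [abs_neg]
  -- Fourier transform of exp(-a|x|)
  have hFT : 𝓕 (fun x : ℝ ↦ ((rexp (-a * |x|) : ℝ) : ℂ))
      = fun w : ℝ ↦ ((2 * (a / (a ^ 2 + (2 * π * w) ^ 2)) : ℝ) : ℂ) := by
    funext w
    rw [aux_fourier_even_real _ hfi hsymf w]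
    congr 1
    have : ∀ x : ℝ, rexp (-a * |x|) * Real.cos (2 * π * w * x)
        = rexp (-a * |x|) * Real.cos ((2 * π * w) * x) := by
      intro x; ring_nf
    rw [integral_congr_ae (Filter.Eventually.of_forall this), aux_cos_line a (2 * π * w) ha]
  -- Integrability of the even function g
  have hgi : Integrable (fun w : ℝ ↦ 2 * (a / (a ^ 2 + (2 * π * w) ^ 2))) := by
    have h2pa : (2 * π / a) ≠ 0 := by positivity
    have base := (integrable_comp_mul_left_iff (fun x : ℝ ↦ (1 + x ^ 2)⁻¹) h2pa).2
      integrable_inv_one_add_sq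
    have heq : (fun w : ℝ ↦ (2 / a) * (1 + ((2 * π / a) * w) ^ 2)⁻¹)
        = fun w : ℝ ↦ 2 * (a / (a ^ 2 + (2 * π * w) ^ 2)) := by
      funext w
      have h1 : (0:ℝ) < a ^ 2 + (2 * π * w) ^ 2 := by positivity
      field_simp
    rw [← heq]
    exact base.const_mul _
  have hginv : Integrable (𝓕 (fun x : ℝ ↦ ((rexp (-a * |x|) : ℝ) : ℂ))) := by
    rw [hFT]; exact hgi.ofReal
  -- Fourier inversion
  have hcont : Continuous (fun x : ℝ ↦ ((rexp (-a * |x|) : ℝ) : ℂ)) := by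
    apply Complex.continuous_ofReal.comp
    exact Real.continuous_exp.comp (continuous_const.mul continuous_abs)
  have hinv := hcont.fourierInv_fourier_eq hfi.ofReal hginv
  have hval := congrFun hinv Δ
  rw [hFT] at hval
  rw [Real.fourierInv_eq_fourier_neg] at hval
  rw [aux_fourier_even_real (fun w ↦ 2 * (a / (a ^ 2 + (2 * π * w) ^ 2))) hgi
    (fun w ↦ by simp only [mul_neg, neg_mul]; ring_nf) (-Δ)] at hval
  have hval' : ∫ x : ℝ, 2 * (a / (a ^ 2 + (2 * π * x) ^ 2)) * Real.cos (2 * π * (-Δ) * x)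
      = rexp (-a * |Δ|) := by exact_mod_cast hval
  have hcosneg : ∀ x : ℝ, 2 * (a / (a ^ 2 + (2 * π * x) ^ 2)) * Real.cos (2 * π * (-Δ) * x)
      = 2 * (a / (a ^ 2 + (2 * π * x) ^ 2)) * Real.cos (2 * π * Δ * x) := by
    intro x
    rw [show (2 * π * (-Δ) * x) = -(2 * π * Δ * x) by ring, Real.cos_neg]
  rw [integral_congr_ae (Filter.Eventually.of_forall hcosneg)] at hval'
  -- relate g to the Poisson kernel
  have hpt : ∀ x : ℝ, β / (β ^ 2 + x ^ 2) * Real.cos (2 * π * Δ * x)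
      = π * (2 * (a / (a ^ 2 + (2 * π * x) ^ 2)) * Real.cos (2 * π * Δ * x)) := by
    intro x
    have h1 : (0:ℝ) < β ^ 2 + x ^ 2 := by positivity
    have h2 : (0:ℝ) < a ^ 2 + (2 * π * x) ^ 2 := by positivity
    have h3 : a ^ 2 + (2 * π * x) ^ 2 = (2 * π) ^ 2 * (β ^ 2 + x ^ 2) := by
      rw [ha_def]; ring
    rw [h3]
    have hπ : (0:ℝ) < π := Real.pi_pos
    field_simp [ha_def]
    ring
  rw [integral_congr_ae (Filter.Eventually.of_forall hpt), integral_const_mul, hval']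

theorem integral_poisson_sub_minorant (β Δ : ℝ) (hβ : 0 < β) (hΔ : 0 < Δ) :
    ∫ x : ℝ,
        (β / (β ^ 2 + x ^ 2) -
          (β / (β ^ 2 + x ^ 2)) *
            ((Real.exp (2 * π * β * Δ) + Real.exp (-2 * π * β * Δ) -
                2 * Real.cos (2 * π * Δ * x)) /
              (Real.exp (π * β * Δ) + Real.exp (-(π * β * Δ))) ^ 2)) =
      2 * π * Real.exp (-2 * π * β * Δ) / (1 + Real.exp (-2 * π * β * Δ)) := by
  have hπ : (0:ℝ) < π := Real.pi_pos
  set s : ℝ := π * β * Δ with hs_def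
  obtain ⟨c, hc_def⟩ : ∃ c : ℝ, c = rexp s + rexp (-s) := ⟨_, rfl⟩
  have hc : 0 < c := by rw [hc_def]; positivity
  set E : ℝ := rexp (2 * π * β * Δ) with hE_def
  set E' : ℝ := rexp (-2 * π * β * Δ) with hE'_def
  have hE'pos : 0 < E' := Real.exp_pos _
  have hEE' : E * E' = 1 := by
    rw [hE_def, hE'_def, ← Real.exp_add]
    norm_num
  have hcc : c ^ 2 = E + E' + 2 := by
    have e1 : rexp s * rexp s = E := by
      rw [← Real.exp_add, hE_def]; congr 1; rw [hs_def]; ring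
    have e2 : rexp (-s) * rexp (-s) = E' := by
      rw [← Real.exp_add, hE'_def]; congr 1; rw [hs_def]; ring
    have e3 : rexp s * rexp (-s) = 1 := by
      rw [← Real.exp_add]; norm_num
    rw [hc_def]
    linear_combination e1 + e2 + 2 * e3
  -- integrability of the Poisson kernel
  have hh : Integrable (fun x : ℝ ↦ β / (β ^ 2 + x ^ 2)) := by
    have hβ' : (β:ℝ)⁻¹ ≠ 0 := by positivity
    have base := (integrable_comp_mul_left_iff (fun x : ℝ ↦ (1 + x ^ 2)⁻¹) hβ').2
      integrable_inv_one_add_sq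
    have heq : (fun x : ℝ ↦ β⁻¹ * (1 + (β⁻¹ * x) ^ 2)⁻¹)
        = fun x : ℝ ↦ β / (β ^ 2 + x ^ 2) := by
      funext x
      have h1 : (0:ℝ) < β ^ 2 + x ^ 2 := by positivity
      field_simp
    rw [← heq]
    exact base.const_mul _
  have hhc : Integrable (fun x : ℝ ↦ β / (β ^ 2 + x ^ 2) * Real.cos (2 * π * Δ * x)) := by
    apply hh.abs.mono
    · exact hh.1.mul ((Real.continuous_cos.comp (by continuity)).aestronglyMeasurable)
    · filter_upwards with x
      simp only [norm_mul, Real.norm_eq_abs, abs_abs]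
      calc |β / (β ^ 2 + x ^ 2)| * |Real.cos (2 * π * Δ * x)|
          ≤ |β / (β ^ 2 + x ^ 2)| * 1 := by gcongr; exact Real.abs_cos_le_one _
        _ = |β / (β ^ 2 + x ^ 2)| := mul_one _
  -- the two integral values
  have hI1 : ∫ x : ℝ, β / (β ^ 2 + x ^ 2) = π := by
    have := poisson_cos β 0 hβ
    simpa using this
  have hI2 : ∫ x : ℝ, β / (β ^ 2 + x ^ 2) * Real.cos (2 * π * Δ * x) = π * E' := by
    have h := poisson_cos β Δ hβ
    rw [abs_of_pos hΔ] at h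
    rw [h, hE'_def]
    congr 2
    ring
  -- pointwise identity
  have hpt : ∀ x : ℝ,
      β / (β ^ 2 + x ^ 2) -
        (β / (β ^ 2 + x ^ 2)) *
          ((rexp (2 * π * β * Δ) + rexp (-2 * π * β * Δ) - 2 * Real.cos (2 * π * Δ * x)) /
            (rexp (π * β * Δ) + rexp (-(π * β * Δ))) ^ 2)
      = 2 / c ^ 2 *
          (β / (β ^ 2 + x ^ 2) + β / (β ^ 2 + x ^ 2) * Real.cos (2 * π * Δ * x)) := by
    intro x
    have hcne : c ≠ 0 := hc.ne'
    have hden : (rexp (π * β * Δ) + rexp (-(π * β * Δ))) = c := by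
      rw [hc_def, hs_def]
    rw [hden, ← hE_def, ← hE'_def]
    have h2 : (E + E' - 2 * Real.cos (2 * π * Δ * x)) / c ^ 2
        = 1 - (2 + 2 * Real.cos (2 * π * Δ * x)) / c ^ 2 := by
      rw [eq_sub_iff_add_eq, ← add_div, div_eq_one_iff_eq (pow_ne_zero 2 hcne)]
      linear_combination -hcc
    rw [h2]
    ring
  rw [integral_congr_ae (Filter.Eventually.of_forall hpt), integral_const_mul,
    integral_add hh hhc, hI1, hI2]
  -- final algebra
  have h1E' : 0 < 1 + E' := by positivity
  have hkey : c ^ 2 * E' = (1 + E') ^ 2 := by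
    linear_combination E' * hcc + hEE'
  rw [div_mul_eq_mul_div, div_eq_div_iff (pow_ne_zero 2 hc.ne') h1E'.ne']
  linear_combination -2 * π * hkey
end

section
/- Let c > 0 be given and m ≥ 0 an integer. There exists a constant C = C(m, c) such that for all 1/2 ≤ α < 1 and x ≥ 3 with (1 − α)²·log x ≥ c, | ∫_2^x t^{−α}(log t)^{−(2m+2)} dt − x^{1−α}/((1−α)(log x)^{2m+2}) | ≤ C·x^{1−α}/((1−α)²(log x)^{2m+3}). -/
open Real MeasureTheory

/-!
Integrating by parts,
`∫₂ˣ t^{-α} (log t)^{-n} = x^{1-α}/((1-α)(log x)^n) - 2^{1-α}/((1-α)(log 2)^n)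
  + n/(1-α) ∫₂ˣ t^{-α} (log t)^{-(n+1)}`,
and the last two terms are nonnegative. Splitting the last integral at `y = x^{2/3}` bounds it by
`y^{1-α}/((1-α)(log 2)^{n+1}) + x^{1-α}/((1-α)((2/3) log x)^{n+1})`. The hypothesis
`(1-α)² log x ≥ c` gives `((1-α) log x)² ≥ c log x`, so
`x^{(1-α)/3} = exp((1-α) log x / 3)` dominates every power of `log x`; this absorbs both the factor
`y^{1-α} = x^{1-α} / x^{(1-α)/3}` and the boundary term at `2`.
-/

lemma log_pow_le_mul_rpow_of_le_sq_mul_log {c ε u x : ℝ} (hc : 0 < c) (hε : 0 < ε)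
    (hu : 0 ≤ u) (hx : 0 < x) (h : c ≤ u ^ 2 * log x) (n : ℕ) :
    log x ^ n ≤ (2 * n).factorial / (ε ^ (2 * n) * c ^ n) * x ^ (ε * u) := by
  have hL : 0 < log x := pos_of_mul_pos_right (hc.trans_le h) (by positivity)
  have hpow : c ^ n * log x ^ n ≤ (u * log x) ^ (2 * n) := by
    rw [pow_mul, ← mul_pow]
    gcongr
    nlinarith
  have hexp : (ε * (u * log x)) ^ (2 * n) / (2 * n).factorial ≤ x ^ (ε * u) := by
    rw [rpow_def_of_pos hx, show log x * (ε * u) = ε * (u * log x) by ring]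
    exact pow_div_factorial_le_exp _ (by positivity) _
  rw [mul_pow, div_le_iff₀ (by positivity)] at hexp
  rw [div_mul_eq_mul_div, le_div_iff₀ (by positivity)]
  calc log x ^ n * (ε ^ (2 * n) * c ^ n) = ε ^ (2 * n) * (c ^ n * log x ^ n) := by ring
    _ ≤ ε ^ (2 * n) * (u * log x) ^ (2 * n) := by gcongr
    _ ≤ _ := by linarith

section

variable {α a b : ℝ} {n : ℕ}

lemma hasDerivAt_rpow_div_mul_log_pow (hα : α ≠ 1) {t : ℝ} (ht : 1 < t) :
    HasDerivAt (fun t ↦ t ^ (1 - α) / ((1 - α) * log t ^ n))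
      (t ^ (-α) / log t ^ n - n / (1 - α) * (t ^ (-α) / log t ^ (n + 1))) t := by
  have ht0 : 0 < t := by linarith
  have hL : 0 < log t := log_pos ht
  have hu : 1 - α ≠ 0 := sub_ne_zero.2 hα.symm
  have hlog : HasDerivAt (fun t ↦ (1 - α) * log t ^ n)
      ((1 - α) * (n * log t ^ (n - 1) * t⁻¹)) t :=
    ((hasDerivAt_log ht0.ne').pow n).const_mul _
  refine ((hasDerivAt_rpow_const (Or.inl ht0.ne')).div hlog (by positivity)).congr_deriv ?_
  rw [show 1 - α - 1 = -α by ring, show t ^ (1 - α) = t ^ (-α) * t by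
    rw [← rpow_add_one ht0.ne']; ring_nf]
  rcases n with _ | n
  · simp only [pow_zero, CharP.cast_eq_zero, zero_mul, zero_div, mul_zero, sub_zero]
    field_simp
  · simp only [Nat.add_sub_cancel, pow_succ]
    field_simp

lemma intervalIntegrable_rpow_neg_div_log_pow (ha : 1 < a) (hab : a ≤ b) :
    IntervalIntegrable (fun t ↦ t ^ (-α) / log t ^ n) volume a b := by
  refine ContinuousOn.intervalIntegrable fun t ht ↦ ?_
  rw [Set.uIcc_of_le hab] at ht
  have ht1 : 1 < t := ha.trans_le ht.1
  have ht0 : 0 < t := by linarith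
  exact ((continuousAt_id.rpow_const (Or.inl ht0.ne')).div
    ((continuousAt_log ht0.ne').pow n) (pow_ne_zero _ (log_pos ht1).ne')).continuousWithinAt

lemma integral_rpow_neg_div_log_pow_nonneg (ha : 1 < a) (hab : a ≤ b) :
    0 ≤ ∫ t in a..b, t ^ (-α) / log t ^ n :=
  intervalIntegral.integral_nonneg hab fun t ht ↦ by
    have ht1 : 1 < t := ha.trans_le ht.1
    have := log_pos ht1
    positivity

lemma integral_rpow_neg_div_log_pow_eq (hα : α ≠ 1) (ha : 1 < a) (hab : a ≤ b) :
    ∫ t in a..b, t ^ (-α) / log t ^ n =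
      b ^ (1 - α) / ((1 - α) * log b ^ n) - a ^ (1 - α) / ((1 - α) * log a ^ n) +
        n / (1 - α) * ∫ t in a..b, t ^ (-α) / log t ^ (n + 1) := by
  have hn := intervalIntegrable_rpow_neg_div_log_pow (α := α) (n := n) ha hab
  have hn1 := (intervalIntegrable_rpow_neg_div_log_pow (α := α) (n := n + 1) ha hab).const_mul
    (n / (1 - α))
  have hftc := intervalIntegral.integral_eq_sub_of_hasDerivAt (fun t ht ↦ by
    rw [Set.uIcc_of_le hab] at ht
    exact hasDerivAt_rpow_div_mul_log_pow (n := n) hα (ha.trans_le ht.1)) (hn.sub hn1)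
  rw [intervalIntegral.integral_sub hn hn1, intervalIntegral.integral_const_mul] at hftc
  linarith

lemma integral_rpow_neg_div_log_pow_le (hα : α < 1) (ha : 1 < a) (hab : a ≤ b) :
    ∫ t in a..b, t ^ (-α) / log t ^ n ≤ b ^ (1 - α) / ((1 - α) * log a ^ n) := by
  have ha0 : 0 < a := by linarith
  have hLa : 0 < log a := log_pos ha
  calc ∫ t in a..b, t ^ (-α) / log t ^ n ≤ ∫ t in a..b, t ^ (-α) / log a ^ n := by
        refine intervalIntegral.integral_mono_on hab
          (intervalIntegrable_rpow_neg_div_log_pow ha hab) ?_ fun t ht ↦ ?_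
        · exact (intervalIntegral.intervalIntegrable_rpow (Or.inr
            (Set.notMem_uIcc_of_lt ha0 (ha0.trans_le hab)))).div_const _
        · have ht0 : 0 < t := ha0.trans_le ht.1
          gcongr
          exact ht.1
    _ = (b ^ (1 - α) - a ^ (1 - α)) / ((1 - α) * log a ^ n) := by
        rw [intervalIntegral.integral_div, integral_rpow (Or.inl (by linarith)),
          show -α + 1 = 1 - α by ring, div_div]
    _ ≤ b ^ (1 - α) / ((1 - α) * log a ^ n) := by
        have : 0 < 1 - α := by linarith
        gcongr
        exact sub_le_self _ (by positivity)

lemma abs_integral_rpow_neg_div_log_pow_sub_le_add (hα : α < 1) (ha : 1 < a) (hab : a ≤ b) :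
    |(∫ t in a..b, t ^ (-α) / log t ^ n) - b ^ (1 - α) / ((1 - α) * log b ^ n)| ≤
      a ^ (1 - α) / ((1 - α) * log a ^ n) +
        n / (1 - α) * ∫ t in a..b, t ^ (-α) / log t ^ (n + 1) := by
  have hu : 0 < 1 - α := by linarith
  have ha0 : 0 < a := by linarith
  have hboundary : 0 ≤ a ^ (1 - α) / ((1 - α) * log a ^ n) := by
    have := log_pos ha
    positivity
  have htail : 0 ≤ n / (1 - α) * ∫ t in a..b, t ^ (-α) / log t ^ (n + 1) :=
    mul_nonneg (by positivity) (integral_rpow_neg_div_log_pow_nonneg ha hab)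
  rw [integral_rpow_neg_div_log_pow_eq hα.ne ha hab, abs_le]
  constructor <;> linarith

lemma integral_rpow_neg_div_log_pow_le_add (hα : α < 1) (ha : 1 < a) {y : ℝ} (hay : a ≤ y)
    (hyb : y ≤ b) :
    ∫ t in a..b, t ^ (-α) / log t ^ n ≤
      y ^ (1 - α) / ((1 - α) * log a ^ n) + b ^ (1 - α) / ((1 - α) * log y ^ n) := by
  rw [← intervalIntegral.integral_add_adjacent_intervals
    (intervalIntegrable_rpow_neg_div_log_pow ha hay)
    (intervalIntegrable_rpow_neg_div_log_pow (ha.trans_le hay) hyb)]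
  exact add_le_add (integral_rpow_neg_div_log_pow_le hα ha hay)
    (integral_rpow_neg_div_log_pow_le hα (ha.trans_le hay) hyb)

end

lemma two_le_rpow_two_div_three {x : ℝ} (hx : 3 ≤ x) : 2 ≤ x ^ (2 / 3 : ℝ) := by
  have hx0 : 0 ≤ x := by linarith
  have hcube : (x ^ (2 / 3 : ℝ)) ^ 3 = x ^ 2 := by
    rw [← rpow_natCast, ← rpow_mul hx0]; norm_num
  refine le_of_pow_le_pow_left₀ (by norm_num : (3 : ℕ) ≠ 0) (by positivity) ?_
  rw [hcube]
  nlinarith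

lemma abs_integral_rpow_neg_div_log_pow_sub_le_of_three_le {α x : ℝ} (n : ℕ)
    (hα₀ : 0 ≤ α) (hα : α < 1) (hx : 3 ≤ x) :
    |(∫ t in (2 : ℝ)..x, t ^ (-α) / log t ^ n) - x ^ (1 - α) / ((1 - α) * log x ^ n)| ≤
      (1 / log 2 ^ n + n / log 2 ^ (n + 1)) * ((x ^ (2 / 3 : ℝ)) ^ (1 - α) / (1 - α) ^ 2) +
        n * (3 / 2) ^ (n + 1) * (x ^ (1 - α) / ((1 - α) ^ 2 * log x ^ (n + 1))) := by
  set u := 1 - α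
  set y := x ^ (2 / 3 : ℝ)
  have hu : 0 < u := by linarith
  have hx0 : 0 < x := by linarith
  have hl2 : 0 < log 2 := log_pos one_lt_two
  have hy2 : 2 ≤ y := two_le_rpow_two_div_three hx
  have hyx : y ≤ x := rpow_le_self_of_one_le (by linarith) (by norm_num)
  have hlogy : log y = 2 / 3 * log x := log_rpow hx0 _
  have hL : 0 < log x := log_pos (by linarith)
  have hboundary : 2 ^ u / (u * log 2 ^ n) ≤ 1 / log 2 ^ n * (y ^ u / u ^ 2) := by
    rw [div_mul_div_comm, one_mul, mul_comm (log 2 ^ n)]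
    have h2y : 2 ^ u ≤ y ^ u := rpow_le_rpow (by norm_num) hy2 hu.le
    have hu1 : u ≤ 1 := by linarith
    gcongr
    nlinarith
  have htail : n / u * (y ^ u / (u * log 2 ^ (n + 1)) + x ^ u / (u * log y ^ (n + 1))) =
      n / log 2 ^ (n + 1) * (y ^ u / u ^ 2) +
        n * (3 / 2) ^ (n + 1) * (x ^ u / (u ^ 2 * log x ^ (n + 1))) := by
    simp only [hlogy, mul_pow, div_pow]
    field_simp
  calc _ ≤ 2 ^ u / (u * log 2 ^ n) + n / u * ∫ t in (2 : ℝ)..x, t ^ (-α) / log t ^ (n + 1) :=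
        abs_integral_rpow_neg_div_log_pow_sub_le_add hα one_lt_two (by linarith)
    _ ≤ 2 ^ u / (u * log 2 ^ n) +
          n / u * (y ^ u / (u * log 2 ^ (n + 1)) + x ^ u / (u * log y ^ (n + 1))) := by
        gcongr
        exact integral_rpow_neg_div_log_pow_le_add hα one_lt_two hy2 hyx
    _ ≤ _ := by
        rw [htail]
        linarith

theorem exists_abs_integral_rpow_neg_div_log_pow_sub_le (c : ℝ) (hc : 0 < c) (n : ℕ) :
    ∃ C : ℝ, 0 < C ∧
      ∀ α x : ℝ, 0 ≤ α → α < 1 → 3 ≤ x → c ≤ (1 - α) ^ 2 * log x →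
        |(∫ t in (2 : ℝ)..x, t ^ (-α) / log t ^ n) -
            x ^ (1 - α) / ((1 - α) * log x ^ n)| ≤
          C * x ^ (1 - α) / ((1 - α) ^ 2 * log x ^ (n + 1)) := by
  set K : ℝ := (2 * (n + 1)).factorial / ((1 / 3) ^ (2 * (n + 1)) * c ^ (n + 1))
  have hl2 : 0 < log 2 := log_pos one_lt_two
  refine ⟨(1 / log 2 ^ n + n / log 2 ^ (n + 1)) * K + n * (3 / 2) ^ (n + 1), by positivity,
    fun α x hα₀ hα hx hcx ↦ ?_⟩
  set u := 1 - α
  have hu : 0 < u := by linarith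
  have hx0 : 0 < x := by linarith
  have hL : 0 < log x := log_pos (by linarith)
  have hgrowth : (x ^ (2 / 3 : ℝ)) ^ u / u ^ 2 ≤ K * x ^ u / (u ^ 2 * log x ^ (n + 1)) := by
    rw [div_le_div_iff₀ (by positivity) (by positivity)]
    have hlog := log_pow_le_mul_rpow_of_le_sq_mul_log hc (by norm_num : (0 : ℝ) < 1 / 3)
      hu.le hx0 hcx (n + 1)
    calc (x ^ (2 / 3 : ℝ)) ^ u * (u ^ 2 * log x ^ (n + 1))
        ≤ (x ^ (2 / 3 : ℝ)) ^ u * (u ^ 2 * (K * x ^ (1 / 3 * u))) := by gcongr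
      _ = K * x ^ u * u ^ 2 := by
          have hsplit : x ^ u = x ^ (2 / 3 * u) * x ^ (1 / 3 * u) := by
            rw [← rpow_add hx0]; ring_nf
          rw [← rpow_mul hx0.le, hsplit]
          ring
  calc _ ≤ _ := abs_integral_rpow_neg_div_log_pow_sub_le_of_three_le n hα₀ hα hx
    _ ≤ (1 / log 2 ^ n + n / log 2 ^ (n + 1)) * (K * x ^ u / (u ^ 2 * log x ^ (n + 1))) +
          n * (3 / 2) ^ (n + 1) * (x ^ u / (u ^ 2 * log x ^ (n + 1))) := by
        gcongr
    _ = _ := by ring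

theorem integral_inv_rpow_log_asymp (c : ℝ) (hc : 0 < c) (m : ℕ) :
    ∃ C : ℝ, 0 < C ∧
      ∀ α x : ℝ, 1 / 2 ≤ α → α < 1 → 3 ≤ x → c ≤ (1 - α) ^ 2 * Real.log x →
        |(∫ t in (2 : ℝ)..x, t ^ (-α) / Real.log t ^ (2 * m + 2)) -
            x ^ (1 - α) / ((1 - α) * Real.log x ^ (2 * m + 2))| ≤
          C * x ^ (1 - α) / ((1 - α) ^ 2 * Real.log x ^ (2 * m + 3)) := by
  obtain ⟨C, hC, hbound⟩ := exists_abs_integral_rpow_neg_div_log_pow_sub_le c hc (2 * m + 2)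
  exact ⟨C, hC, fun α x hα₀ hα hx hcx ↦ hbound α x (by linarith) hα hx hcx⟩
end

section
/- Let m ≥ 0 and k ≥ 0 be integers, 1/2 ≤ α < 1, and x ≥ 3. Then ∫_2^x t^{α−1}·((k+2)log x − log t)^{−(2m+2)} dt = x^{α}/(α((k+1)log x)^{2m+2}) − 2^{α}/(α((k+2)log x − log 2)^{2m+2}) + E, where |E| ≤ C(m)·x^{α}/((k+1)log x)^{2m+3} for a constant C(m) depending only on m. -/
/-!
Write `L t = c - log t` with `c = (k + 2) log x`. The function `t ^ α / (α * L t ^ n)` has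
derivative `t ^ (α - 1) / L t ^ n + (n / α) * t ^ (α - 1) / L t ^ (n + 1)`, so the integral is the
boundary term minus `n / α` times the same integral with `n + 1`. On `[2, x]` we have
`L t ≥ L x = (k + 1) log x`, which bounds that remainder by `n x ^ α / (α² ((k + 1) log x) ^ (n + 1))`;
`α ≥ 1/2` turns `n / α²` into the constant `4 n = 8 m + 8`.
-/

open Real MeasureTheory Set

section ShiftedLog

variable {a b c α : ℝ}

lemma sub_log_pos_of_mem_Icc (ha : 0 < a) (hb : log b < c) {t : ℝ} (ht : t ∈ Icc a b) :
    0 < c - log t := by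
  have := log_le_log (ha.trans_le ht.1) ht.2
  linarith

lemma hasDerivAt_rpow_div_pow_sub_log (n : ℕ) (hα : α ≠ 0) {t : ℝ} (ht : 0 < t)
    (hL : c - log t ≠ 0) :
    HasDerivAt (fun s => s ^ α / (α * (c - log s) ^ n))
      (t ^ (α - 1) / (c - log t) ^ n + n / α * (t ^ (α - 1) / (c - log t) ^ (n + 1))) t := by
  have hpow : HasDerivAt (fun s => s ^ α) (α * t ^ (α - 1)) t :=
    hasDerivAt_rpow_const (Or.inl ht.ne')
  have hden : HasDerivAt (fun s => α * (c - log s) ^ n)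
      (α * (n * (c - log t) ^ (n - 1) * -t⁻¹)) t :=
    (((hasDerivAt_log ht.ne').const_sub c).pow n).const_mul α
  refine (hpow.div hden (by positivity)).congr_deriv ?_
  rw [rpow_sub_one ht.ne']
  rcases n with _ | n
  · field_simp
    simp
  · field_simp
    push_cast
    ring

lemma intervalIntegrable_rpow_div_pow_sub_log (n : ℕ) (ha : 0 < a) (hab : a ≤ b)
    (hb : log b < c) :
    IntervalIntegrable (fun t => t ^ (α - 1) / (c - log t) ^ n) volume a b := by
  refine ContinuousOn.intervalIntegrable fun t ht => ?_
  rw [uIcc_of_le hab] at ht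
  have ht0 : t ≠ 0 := (ha.trans_le ht.1).ne'
  exact ((continuousAt_rpow_const t _ (Or.inl ht0)).div
    ((continuousAt_const.sub (continuousAt_log ht0)).pow n)
    (pow_ne_zero _ (sub_log_pos_of_mem_Icc ha hb ht).ne')).continuousWithinAt

lemma integral_rpow_div_pow_sub_log (n : ℕ) (hα : α ≠ 0) (ha : 0 < a) (hab : a ≤ b)
    (hb : log b < c) :
    ∫ t in a..b, t ^ (α - 1) / (c - log t) ^ n =
      b ^ α / (α * (c - log b) ^ n) - a ^ α / (α * (c - log a) ^ n)
        - n / α * ∫ t in a..b, t ^ (α - 1) / (c - log t) ^ (n + 1) := by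
  have hn := intervalIntegrable_rpow_div_pow_sub_log (α := α) n ha hab hb
  have hn1 := (intervalIntegrable_rpow_div_pow_sub_log (α := α) (n + 1) ha hab hb).const_mul
    ((n : ℝ) / α)
  have hftc := intervalIntegral.integral_eq_sub_of_hasDerivAt
    (fun t ht => hasDerivAt_rpow_div_pow_sub_log n hα
      (ha.trans_le (uIcc_of_le hab ▸ ht).1)
      (sub_log_pos_of_mem_Icc ha hb (uIcc_of_le hab ▸ ht)).ne') (hn.add hn1)
  rw [intervalIntegral.integral_add hn hn1, intervalIntegral.integral_const_mul] at hftc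
  linarith

lemma integral_rpow_div_pow_sub_log_nonneg (n : ℕ) (ha : 0 < a) (hab : a ≤ b)
    (hb : log b < c) :
    0 ≤ ∫ t in a..b, t ^ (α - 1) / (c - log t) ^ n :=
  intervalIntegral.integral_nonneg hab fun t ht =>
    have := sub_log_pos_of_mem_Icc ha hb ht
    have := ha.trans_le ht.1
    by positivity

lemma integral_rpow_div_pow_sub_log_le (n : ℕ) (hα : 0 < α) (ha : 0 < a) (hab : a ≤ b)
    (hb : log b < c) :
    ∫ t in a..b, t ^ (α - 1) / (c - log t) ^ n ≤ b ^ α / (α * (c - log b) ^ n) := by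
  have hL : 0 < c - log b := sub_pos.2 hb
  have zero_notMem : (0 : ℝ) ∉ uIcc a b := fun h => (ha.trans_le (uIcc_of_le hab ▸ h).1).ne' rfl
  calc ∫ t in a..b, t ^ (α - 1) / (c - log t) ^ n
      ≤ ∫ t in a..b, t ^ (α - 1) / (c - log b) ^ n := by
        refine intervalIntegral.integral_mono_on hab
          (intervalIntegrable_rpow_div_pow_sub_log n ha hab hb)
          ((intervalIntegral.intervalIntegrable_rpow (Or.inr zero_notMem)).div_const _)
          fun t ht => ?_
        have := sub_log_pos_of_mem_Icc ha hb ht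
        have := ha.trans_le ht.1
        gcongr
        exact ht.2
    _ = (b ^ α - a ^ α) / (α * (c - log b) ^ n) := by
        rw [intervalIntegral.integral_div, integral_rpow (Or.inr ⟨by linarith, ?_⟩)]
        · rw [sub_add_cancel, div_div]
        · exact zero_notMem
    _ ≤ b ^ α / (α * (c - log b) ^ n) := by
        gcongr
        exact sub_le_self _ (rpow_nonneg ha.le _)

end ShiftedLog

theorem integral_rpow_shifted_log_asymp (m : ℕ) :
    ∃ C : ℝ, 0 < C ∧
      ∀ (k : ℕ) (α x : ℝ), 1 / 2 ≤ α → α < 1 → 3 ≤ x →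
        ∃ E : ℝ,
          (∫ t in (2 : ℝ)..x,
              t ^ (α - 1) / (((k : ℝ) + 2) * Real.log x - Real.log t) ^ (2 * m + 2)) =
            x ^ α / (α * (((k : ℝ) + 1) * Real.log x) ^ (2 * m + 2)) -
              (2 : ℝ) ^ α / (α * (((k : ℝ) + 2) * Real.log x - Real.log 2) ^ (2 * m + 2)) + E ∧
          |E| ≤ C * x ^ α / (((k : ℝ) + 1) * Real.log x) ^ (2 * m + 3) := by
  refine ⟨4 * (2 * m + 2 : ℕ), by positivity, fun k α x hα _ hx => ?_⟩
  have hα0 : 0 < α := by linarith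
  have hlog : 0 < log x := log_pos (by linarith)
  have hc : ((k : ℝ) + 2) * log x - log x = (k + 1) * log x := by ring
  have hb : log x < ((k : ℝ) + 2) * log x := by nlinarith [k.cast_nonneg (α := ℝ)]
  have hx2 : (2 : ℝ) ≤ x := by linarith
  set n := 2 * m + 2
  set J := ∫ t in (2 : ℝ)..x, t ^ (α - 1) / (((k : ℝ) + 2) * log x - log t) ^ (n + 1)
  have hJ0 : 0 ≤ J := integral_rpow_div_pow_sub_log_nonneg _ two_pos hx2 hb
  have hJ : J ≤ x ^ α / (α * (((k : ℝ) + 1) * log x) ^ (n + 1)) :=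
    hc ▸ integral_rpow_div_pow_sub_log_le _ hα0 two_pos hx2 hb
  refine ⟨-(n / α * J), ?_, ?_⟩
  · rw [integral_rpow_div_pow_sub_log n hα0.ne' two_pos hx2 hb, hc]
    ring
  · rw [abs_neg, abs_of_nonneg (by positivity)]
    have hα2 : 1 / α ^ 2 ≤ 4 := by
      rw [div_le_iff₀ (by positivity)]
      nlinarith
    calc n / α * J ≤ n / α * (x ^ α / (α * (((k : ℝ) + 1) * log x) ^ (n + 1))) := by gcongr
      _ = 1 / α ^ 2 * n * x ^ α / (((k : ℝ) + 1) * log x) ^ (n + 1) := by field_simp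
      _ ≤ 4 * n * x ^ α / (((k : ℝ) + 1) * log x) ^ (n + 1) := by gcongr
end
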